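/- Suppose f is homogeneous of degree ν > 0 with respect to (λ^r, λ^q) and ℓ, ȷ are homogeneous of degree μ = 0 (invariant under the dilations). Under existence of optimal sequences, for every x and ε > 0, V_{d,1,1}(λ^r(ε)x) = V_{d,1,1}(x), i.e., the optimal value function is constant along homogeneous rays, and if u* is optimal at x then the sequence with k-th element λ^q(ε)^{ν^k} u*_k is optimal at λ^r(ε)x. -/

import Mathlib

open scoped ENNReal

noncomputable section

def dil {n : ℕ} (r : Fin n → ℝ) (ε : ℝ) (x : Fin n → ℝ) : Fin n → ℝ :=
  fun i => ε ^ (r i) * x i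

def dilPow {n : ℕ} (r : Fin n → ℝ) (ε c : ℝ) (x : Fin n → ℝ) : Fin n → ℝ :=
  fun i => ε ^ (c * r i) * x i

def sol {n m : ℕ} (f : (Fin n → ℝ) → (Fin m → ℝ) → Fin n → ℝ)
    (u : ℕ → Fin m → ℝ) (x : Fin n → ℝ) : ℕ → Fin n → ℝ
  | 0 => x
  | k + 1 => f (sol f u x k) (u k)

/-- Cost `J_{d,γ1,γ2}(x,u) = Σ_{k<d} γ1^{γ2^k} ℓ(φ(k,x,u),u_k) + γ1^{γ2^d} ȷ(φ(d,x,u))`. -/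
def cost {n m : ℕ} (f : (Fin n → ℝ) → (Fin m → ℝ) → Fin n → ℝ)
    (ℓ : (Fin n → ℝ) → (Fin m → ℝ) → ℝ≥0∞) (J : (Fin n → ℝ) → ℝ≥0∞)
    (d : ℕ) (γ1 γ2 : ℝ) (x : Fin n → ℝ) (u : ℕ → Fin m → ℝ) : ℝ≥0∞ :=
  (∑ k ∈ Finset.range d, ENNReal.ofReal (γ1 ^ (γ2 ^ k)) * ℓ (sol f u x k) (u k))
    + ENNReal.ofReal (γ1 ^ (γ2 ^ d)) * J (sol f u x d)

/-- Optimal value function `V_{d,γ1,γ2}(x)`. -/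
def val {n m : ℕ} (f : (Fin n → ℝ) → (Fin m → ℝ) → Fin n → ℝ)
    (ℓ : (Fin n → ℝ) → (Fin m → ℝ) → ℝ≥0∞) (J : (Fin n → ℝ) → ℝ≥0∞)
    (d : ℕ) (γ1 γ2 : ℝ) (x : Fin n → ℝ) : ℝ≥0∞ :=
  ⨅ u : ℕ → Fin m → ℝ, cost f ℓ J d γ1 γ2 x u

/-! The input sequence `u` and the dilated sequence `k ↦ λ^q(ε^{ν^k}) u_k` drive the
trajectories from `x` and from `λ^r(ε) x`, and at step `k` the second is the first dilated by
`ε^{ν^k}`. Since `ℓ` and `ȷ` are dilation invariant, both sequences have the same cost, whatever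
the weights. Dilating by `ε⁻¹` undoes dilating by `ε`, so the two infima are equal. -/

lemma dilPow_eq_dil {n : ℕ} (r : Fin n → ℝ) {ε : ℝ} (hε : 0 < ε) (c : ℝ) (x : Fin n → ℝ) :
    dilPow r ε c x = dil r (ε ^ c) x := by
  funext i
  simp only [dilPow, dil, Real.rpow_mul hε.le]

lemma dil_inv_dil {n : ℕ} (r : Fin n → ℝ) {ε : ℝ} (hε : 0 < ε) (x : Fin n → ℝ) :
    dil r ε⁻¹ (dil r ε x) = x := by
  funext i
  simp only [dil, Real.inv_rpow hε.le, inv_mul_cancel_left₀ (Real.rpow_pos_of_pos hε (r i)).ne']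

section Dilation

variable {n m : ℕ} {f : (Fin n → ℝ) → (Fin m → ℝ) → Fin n → ℝ}
  {ℓ : (Fin n → ℝ) → (Fin m → ℝ) → ℝ≥0∞} {J : (Fin n → ℝ) → ℝ≥0∞}
  {r : Fin n → ℝ} {q : Fin m → ℝ} {ν ε : ℝ}

lemma sol_dil (hf : ∀ x u (ε : ℝ), 0 < ε → f (dil r ε x) (dil q ε u) = dilPow r ε ν (f x u))
    (hε : 0 < ε) (u : ℕ → Fin m → ℝ) (x : Fin n → ℝ) (k : ℕ) :
    sol f (fun k => dilPow q ε (ν ^ k) (u k)) (dil r ε x) k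
      = dilPow r ε (ν ^ k) (sol f u x k) := by
  induction k with
  | zero => rw [sol, sol, pow_zero, dilPow_eq_dil r hε, Real.rpow_one]
  | succ k ih =>
    have hεk : 0 < ε ^ ν ^ k := Real.rpow_pos_of_pos hε _
    calc f (sol f (fun k => dilPow q ε (ν ^ k) (u k)) (dil r ε x) k) (dilPow q ε (ν ^ k) (u k))
        = f (dil r (ε ^ ν ^ k) (sol f u x k)) (dil q (ε ^ ν ^ k) (u k)) := by
          rw [ih, dilPow_eq_dil r hε, dilPow_eq_dil q hε]
      _ = dil r ((ε ^ ν ^ k) ^ ν) (f (sol f u x k) (u k)) := by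
          rw [hf _ _ _ hεk, dilPow_eq_dil r hεk]
      _ = dilPow r ε (ν ^ (k + 1)) (f (sol f u x k) (u k)) := by
          rw [dilPow_eq_dil r hε, ← Real.rpow_mul hε.le, pow_succ]

variable (hf : ∀ x u (ε : ℝ), 0 < ε → f (dil r ε x) (dil q ε u) = dilPow r ε ν (f x u))
  (hℓ : ∀ x u (ε : ℝ), 0 < ε → ℓ (dil r ε x) (dil q ε u) = ℓ x u)
  (hJ : ∀ x (ε : ℝ), 0 < ε → J (dil r ε x) = J x)
include hf hℓ hJ

lemma cost_dil (d : ℕ) (γ1 γ2 : ℝ) (hε : 0 < ε) (x : Fin n → ℝ) (u : ℕ → Fin m → ℝ) :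
    cost f ℓ J d γ1 γ2 (dil r ε x) (fun k => dilPow q ε (ν ^ k) (u k))
      = cost f ℓ J d γ1 γ2 x u := by
  have hεk (k : ℕ) : 0 < ε ^ ν ^ k := Real.rpow_pos_of_pos hε _
  unfold cost
  congr 1
  · refine Finset.sum_congr rfl fun k _ => ?_
    dsimp only
    rw [sol_dil hf hε, dilPow_eq_dil r hε, dilPow_eq_dil q hε, hℓ _ _ _ (hεk k)]
  · rw [sol_dil hf hε, dilPow_eq_dil r hε, hJ _ _ (hεk d)]

lemma val_dil_le (d : ℕ) (γ1 γ2 : ℝ) (hε : 0 < ε) (x : Fin n → ℝ) :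
    val f ℓ J d γ1 γ2 (dil r ε x) ≤ val f ℓ J d γ1 γ2 x :=
  le_iInf fun u => (iInf_le _ _).trans_eq (cost_dil hf hℓ hJ d γ1 γ2 hε x u)

lemma val_dil (d : ℕ) (γ1 γ2 : ℝ) (hε : 0 < ε) (x : Fin n → ℝ) :
    val f ℓ J d γ1 γ2 (dil r ε x) = val f ℓ J d γ1 γ2 x := by
  refine le_antisymm (val_dil_le hf hℓ hJ d γ1 γ2 hε x) ?_
  simpa only [dil_inv_dil r hε] using
    val_dil_le hf hℓ hJ d γ1 γ2 (inv_pos.mpr hε) (dil r ε x)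

end Dilation

theorem stmt5_general {n m : ℕ} (f : (Fin n → ℝ) → (Fin m → ℝ) → Fin n → ℝ)
    (ℓ : (Fin n → ℝ) → (Fin m → ℝ) → ℝ≥0∞) (J : (Fin n → ℝ) → ℝ≥0∞)
    (r : Fin n → ℝ) (q : Fin m → ℝ) (ν : ℝ)
    (hf : ∀ x u (ε : ℝ), 0 < ε → f (dil r ε x) (dil q ε u) = dilPow r ε ν (f x u))
    (hℓ : ∀ x u (ε : ℝ), 0 < ε → ℓ (dil r ε x) (dil q ε u) = ℓ x u)
    (hJ : ∀ x (ε : ℝ), 0 < ε → J (dil r ε x) = J x)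
    (d : ℕ) :
    ∀ (x : Fin n → ℝ) (ε : ℝ), 0 < ε →
      val f ℓ J d 1 1 (dil r ε x) = val f ℓ J d 1 1 x ∧
      ∀ ustar : ℕ → Fin m → ℝ,
        cost f ℓ J d 1 1 x ustar = val f ℓ J d 1 1 x →
        cost f ℓ J d 1 1 (dil r ε x) (fun k => dilPow q ε (ν ^ k) (ustar k))
          = val f ℓ J d 1 1 (dil r ε x) := by
  intro x ε hε
  refine ⟨val_dil hf hℓ hJ d 1 1 hε x, fun ustar hopt => ?_⟩
  rw [cost_dil hf hℓ hJ d 1 1 hε x ustar, hopt, val_dil hf hℓ hJ d 1 1 hε x]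

/-- Corollary (μ = 0 case): the optimal value function is constant along homogeneous
rays, and the scaled input sequence is optimal for the same cost. -/
theorem stmt5 {n m : ℕ} (f : (Fin n → ℝ) → (Fin m → ℝ) → Fin n → ℝ)
    (ℓ : (Fin n → ℝ) → (Fin m → ℝ) → ℝ≥0∞) (J : (Fin n → ℝ) → ℝ≥0∞)
    (r : Fin n → ℝ) (q : Fin m → ℝ) (ν : ℝ)
    (hr : ∀ i, 0 < r i) (hq : ∀ j, 0 < q j) (hν : 0 < ν)
    (hf : ∀ x u (ε : ℝ), 0 < ε → f (dil r ε x) (dil q ε u) = dilPow r ε ν (f x u))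
    (hℓ : ∀ x u (ε : ℝ), 0 < ε → ℓ (dil r ε x) (dil q ε u) = ℓ x u)
    (hJ : ∀ x (ε : ℝ), 0 < ε → J (dil r ε x) = J x)
    (d : ℕ) (hd : 0 < d)
    (hex : ∀ (γ1 γ2 : ℝ), 0 < γ1 → ∀ x : Fin n → ℝ,
      ∃ u, cost f ℓ J d γ1 γ2 x u = val f ℓ J d γ1 γ2 x ∧ cost f ℓ J d γ1 γ2 x u ≠ ⊤) :
    ∀ (x : Fin n → ℝ) (ε : ℝ), 0 < ε →
      val f ℓ J d 1 1 (dil r ε x) = val f ℓ J d 1 1 x ∧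
      ∀ ustar : ℕ → Fin m → ℝ,
        cost f ℓ J d 1 1 x ustar = val f ℓ J d 1 1 x →
        cost f ℓ J d 1 1 (dil r ε x) (fun k => dilPow q ε (ν ^ k) (ustar k))
          = val f ℓ J d 1 1 (dil r ε x) :=
  stmt5_general f ℓ J r q ν hf hℓ hJ d
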